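/- The operator P₃ : Dom(P₃) ⊂ C₃(Ḡ) → C₃(Ḡ), defined by P₃u = Δu on Dom(P₃) = {u ∈ C₃(Ḡ) : Δu ∈ C₃(Ḡ)} (with Δu understood in the sense of distributions), admits a closure P̄₃ : Dom(P̄₃) ⊂ C₃(Ḡ) → C₃(Ḡ) as an unbounded operator in the Banach space C₃(Ḡ). -/

import Mathlib

open MeasureTheory Metric Set Filter Topology BoundedContinuousFunction

noncomputable section

/-- The plane `ℝ²`. -/
abbrev E2 := EuclideanSpace ℝ (Fin 2)

/-- The Laplacian of a function `φ : ℝ² → ℝ`. -/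
def lap (φ : E2 → ℝ) (x : E2) : ℝ :=
  ∑ i : Fin 2,
    fderiv ℝ (fun y => fderiv ℝ φ y (EuclideanSpace.single i 1)) x (EuclideanSpace.single i 1)

/-- `f` is the Laplacian of `u` on the open set `G` in the sense of distributions. -/
def IsDistLaplacianOn (G : Set E2) (u f : E2 → ℝ) : Prop :=
  ∀ φ : E2 → ℝ, ContDiff ℝ (⊤ : ℕ∞) φ → HasCompactSupport φ → tsupport φ ⊆ G →
    ∫ x in G, u x * lap φ x = ∫ x in G, f x * φ x

/-- Extension by zero (to the whole plane) of a function defined on `closure G`. -/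
def extendByZero (G : Set E2) (u : ↥(closure G) →ᵇ ℝ) : E2 → ℝ :=
  Function.extend Subtype.val (⇑u) 0

/-- `Γ` is a smooth (`C^∞`) regular simple curve. -/
def IsSmoothCurve (Γ : Set E2) : Prop :=
  ∃ γ : ℝ → E2, ContDiff ℝ (⊤ : ℕ∞) γ ∧ InjOn γ (Ioo 0 1) ∧
    (∀ t ∈ Ioo (0 : ℝ) 1, deriv γ t ≠ 0) ∧ γ '' Ioo 0 1 = Γ

/-- Near the point `g`, the region `G` coincides with a plane angle of opening `π`
(i.e. with a half-plane whose boundary line passes through `g`). -/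
def HasFlatAngleAt (G : Set E2) (g : E2) (ε : ℝ) : Prop :=
  ∃ ν : E2, ν ≠ 0 ∧ G ∩ ball g ε = {x | 0 < (inner ℝ ν (x - g) : ℝ)} ∩ ball g ε

/-- `Ω` is a smooth nondegenerate transformation (injective with everywhere
invertible differential) defined on a neighborhood of the curve `closure Γ`. -/
def IsSmoothNondegOn (Ω : E2 → E2) (Γ : Set E2) : Prop :=
  ∃ U : Set E2, IsOpen U ∧ closure Γ ⊆ U ∧ ContDiffOn ℝ (⊤ : ℕ∞) Ω U ∧
    InjOn Ω U ∧ ∀ y ∈ U, LinearMap.det ((fderiv ℝ Ω y) : E2 →ₗ[ℝ] E2) ≠ 0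

/-- `b ∈ C^∞(closure Γ)`: `b` is smooth on a neighborhood of `closure Γ`. -/
def IsSmoothOnCl (b : E2 → ℝ) (Γ : Set E2) : Prop :=
  ∃ U : Set E2, IsOpen U ∧ closure Γ ⊆ U ∧ ContDiffOn ℝ (⊤ : ℕ∞) b U

/-- The geometric data of Example 3: a bounded plane region `G` with smooth boundary
`∂G = Γ₁ ∪ Γ₂ ∪ {g₁, g₂}`, coinciding with a plane angle of opening `π` near `g₁, g₂`,
coefficients `b₁, b₂` equal to `1` near `g₁`, and smooth nondegenerate transformations
`Ω₁, Ω₂` mapping `Γ₁, Γ₂` into `G`, fixing `g₁`, and equal near `g₁` to the rotation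
by the angle `π/2` about `g₁` inwards the region `G`. -/
structure Setting3 where
  /-- the region -/
  G : Set E2
  /-- the boundary arcs -/
  Γ₁ : Set E2
  Γ₂ : Set E2
  /-- the conjugation points, `𝒦 = {g₁, g₂}` -/
  g₁ : E2
  g₂ : E2
  ε : ℝ
  hG_open : IsOpen G
  hG_conn : IsConnected G
  hG_bdd : Bornology.IsBounded G
  hg_ne : g₁ ≠ g₂
  /-- `∂G = Γ₁ ∪ Γ₂ ∪ 𝒦` -/
  hbdry : frontier G = Γ₁ ∪ Γ₂ ∪ {g₁, g₂}
  /-- `Γ₁ ∩ Γ₂ = ∅` -/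
  hΓ_disj : Γ₁ ∩ Γ₂ = ∅
  hK_disj : ({g₁, g₂} : Set E2) ∩ (Γ₁ ∪ Γ₂) = ∅
  /-- `closure Γ₁ ∩ closure Γ₂ = 𝒦` -/
  hΓcl : closure Γ₁ ∩ closure Γ₂ = {g₁, g₂}
  /-- `Γ₁`, `Γ₂` are open in the topology of `∂G` -/
  hΓ₁_open : ∃ V : Set E2, IsOpen V ∧ Γ₁ = V ∩ frontier G
  hΓ₂_open : ∃ V : Set E2, IsOpen V ∧ Γ₂ = V ∩ frontier G
  hΓ₁_conn : IsConnected Γ₁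
  hΓ₂_conn : IsConnected Γ₂
  hΓ₁_curve : IsSmoothCurve Γ₁
  hΓ₂_curve : IsSmoothCurve Γ₂
  hε : 0 < ε
  /-- `G` coincides with a plane angle of opening `π` near `g₁` and `g₂` -/
  hangle₁ : HasFlatAngleAt G g₁ ε
  hangle₂ : HasFlatAngleAt G g₂ ε
  /-- the coefficients in the nonlocal conditions -/
  b₁ : E2 → ℝ
  b₂ : E2 → ℝ
  /-- the transformations in the nonlocal conditions -/
  Ω₁ : E2 → E2
  Ω₂ : E2 → E2
  hb₁_smooth : IsSmoothOnCl b₁ Γ₁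
  hb₂_smooth : IsSmoothOnCl b₂ Γ₂
  hb₁_range : ∀ y ∈ closure Γ₁, 0 ≤ b₁ y ∧ b₁ y ≤ 1
  hb₂_range : ∀ y ∈ closure Γ₂, 0 ≤ b₂ y ∧ b₂ y ≤ 1
  /-- `b₁ = b₂ = 1` on `𝒪_{ε/2}(g₁)` -/
  hb₁_one : ∀ y ∈ closure Γ₁ ∩ ball g₁ (ε / 2), b₁ y = 1
  hb₂_one : ∀ y ∈ closure Γ₂ ∩ ball g₁ (ε / 2), b₂ y = 1
  /-- `b₁, b₂ = 0` outside `𝒪_ε(g₁)` -/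
  hb₁_zero : ∀ y ∈ closure Γ₁, y ∉ ball g₁ ε → b₁ y = 0
  hb₂_zero : ∀ y ∈ closure Γ₂, y ∉ ball g₁ ε → b₂ y = 0
  hΩ₁_nondeg : IsSmoothNondegOn Ω₁ Γ₁
  hΩ₂_nondeg : IsSmoothNondegOn Ω₂ Γ₂
  /-- `Ω_j(Γ_j) ⊆ G` -/
  hΩ₁_maps : Ω₁ '' Γ₁ ⊆ G
  hΩ₂_maps : Ω₂ '' Γ₂ ⊆ G
  /-- `Ω_j(g₁) = g₁` -/
  hΩ₁_g₁ : Ω₁ g₁ = g₁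
  hΩ₂_g₁ : Ω₂ g₁ = g₁
  /-- on `𝒪_ε(g₁)`, each `Ω_j` is the rotation by the angle `π/2` about `g₁`
  (a linear isometry `R` with `det R = 1` and `R² = -id`) inwards the region `G` -/
  hΩ₁_rot : ∃ R : E2 ≃ₗᵢ[ℝ] E2, R.toLinearEquiv.det = 1 ∧ (∀ x, R (R x) = -x) ∧
    ∀ y ∈ ball g₁ ε, Ω₁ y = g₁ + R (y - g₁)
  hΩ₂_rot : ∃ R : E2 ≃ₗᵢ[ℝ] E2, R.toLinearEquiv.det = 1 ∧ (∀ x, R (R x) = -x) ∧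
    ∀ y ∈ ball g₁ ε, Ω₂ y = g₁ + R (y - g₁)
  -- inclusions (consequences of the above) needed to state the nonlocal conditions
  hΓ₁_sub : Γ₁ ⊆ closure G
  hΓ₂_sub : Γ₂ ⊆ closure G
  hg₁_sub : g₁ ∈ closure G
  hg₂_sub : g₂ ∈ closure G
  hΩ₁_sub : ∀ y ∈ Γ₁, Ω₁ y ∈ closure G
  hΩ₂_sub : ∀ y ∈ Γ₂, Ω₂ y ∈ closure G

/-- The space `C₃(Ḡ)`: continuous functions `u` on `closure G` satisfying the nonlocal
conditions `u(y) - b_j(y) u(Ω_j(y)) = 0` for `y ∈ Γ_j`, `j = 1, 2`, and `u(y) = 0`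
for `y ∈ 𝒦 = {g₁, g₂}`. -/
def Setting3.C3 (S : Setting3) : Set (↥(closure S.G) →ᵇ ℝ) :=
  {u | (∀ y, ∀ hy : y ∈ S.Γ₁,
          u ⟨y, S.hΓ₁_sub hy⟩ - S.b₁ y * u ⟨S.Ω₁ y, S.hΩ₁_sub y hy⟩ = 0) ∧
       (∀ y, ∀ hy : y ∈ S.Γ₂,
          u ⟨y, S.hΓ₂_sub hy⟩ - S.b₂ y * u ⟨S.Ω₂ y, S.hΩ₂_sub y hy⟩ = 0) ∧
       u ⟨S.g₁, S.hg₁_sub⟩ = 0 ∧ u ⟨S.g₂, S.hg₂_sub⟩ = 0}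

/-- The graph of the operator `P₃ : Dom(P₃) ⊆ C₃(Ḡ) → C₃(Ḡ)`, `P₃ u = Δu` on
`Dom(P₃) = {u ∈ C₃(Ḡ) : Δu ∈ C₃(Ḡ)}`, the Laplacian taken in the sense of distributions. -/
def Setting3.graphP (S : Setting3) :
    Set ((↥(closure S.G) →ᵇ ℝ) × (↥(closure S.G) →ᵇ ℝ)) :=
  {p | p.1 ∈ S.C3 ∧ p.2 ∈ S.C3 ∧
    IsDistLaplacianOn S.G (extendByZero S.G p.1) (extendByZero S.G p.2)}

/-!
A pair `(u, f)` in the closure of the graph is a uniform limit of pairs `(uₙ, fₙ)` with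
`∫_G uₙ Δφ = ∫_G fₙ φ` for every test function `φ`. For fixed `φ` both sides are continuous in
the sup norm, so the identity passes to the limit `(u, f)`. The identity then determines `f` from
`u`: two such `f` differ by a continuous function orthogonal to all test functions, which vanishes
on `G` by the fundamental lemma of the calculus of variations, hence on `Ḡ` by continuity.
-/

theorem IsOpen.eqOn_zero_of_setIntegral_mul_eq_zero {E : Type*} [NormedAddCommGroup E]
    [NormedSpace ℝ E] [FiniteDimensional ℝ E] [MeasurableSpace E] [BorelSpace E]
    {μ : Measure E} [IsLocallyFiniteMeasure μ] [μ.IsOpenPosMeasure] {U : Set E} {f : E → ℝ}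
    (hU : IsOpen U) (hf : ContinuousOn f U)
    (h : ∀ g : E → ℝ, ContDiff ℝ (⊤ : ℕ∞) g → HasCompactSupport g → tsupport g ⊆ U →
      ∫ x in U, f x * g x ∂μ = 0) :
    EqOn f 0 U := by
  have hae : ∀ᵐ x ∂μ, x ∈ U → f x = 0 := by
    refine hU.ae_eq_zero_of_integral_contDiff_smul_eq_zero
      (hf.locallyIntegrableOn hU.measurableSet) fun g hg hgc hgU => ?_
    have hout : ∀ x ∉ U, g x • f x = 0 := fun x hx => by
      simp [image_eq_zero_of_notMem_tsupport fun h => hx (hgU h)]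
    rw [← setIntegral_eq_integral_of_forall_compl_eq_zero hout]
    simpa only [smul_eq_mul, mul_comm] using h g hg hgc hgU
  refine Measure.eqOn_open_of_ae_eq (μ := μ) ?_ hU hf continuousOn_const
  filter_upwards [ae_restrict_mem hU.measurableSet, ae_restrict_of_ae hae] with x hxU hx
  exact hx hxU

theorem continuous_lap {φ : E2 → ℝ} (hφ : ContDiff ℝ (⊤ : ℕ∞) φ) : Continuous (lap φ) := by
  refine continuous_finsetSum _ fun i _ => ?_
  have h1 : ContDiff ℝ (⊤ : ℕ∞) (fun y => fderiv ℝ φ y (EuclideanSpace.single i 1)) :=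
    (hφ.fderiv_right (m := (⊤ : ℕ∞)) le_rfl).clm_apply contDiff_const
  exact ((h1.fderiv_right (m := (⊤ : ℕ∞)) le_rfl).clm_apply contDiff_const).continuous

theorem HasCompactSupport.lap {φ : E2 → ℝ} (hφ : HasCompactSupport φ) :
    HasCompactSupport (lap φ) := by
  have h : ∀ i : Fin 2, HasCompactSupport fun x =>
      fderiv ℝ (fun y => fderiv ℝ φ y (EuclideanSpace.single i 1)) x (EuclideanSpace.single i 1) :=
    fun i => (hφ.fderiv_apply ℝ _).fderiv_apply ℝ _
  show HasCompactSupport fun x => ∑ i : Fin 2, _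
  simp only [Fin.sum_univ_two]
  exact (h 0).add (h 1)

section extendByZero

variable {G : Set E2}

theorem extendByZero_apply_of_mem (u : closure G →ᵇ ℝ) {x : E2} (hx : x ∈ closure G) :
    extendByZero G u x = u ⟨x, hx⟩ :=
  Subtype.val_injective.extend_apply (⇑u) 0 ⟨x, hx⟩

theorem extendByZero_apply_of_notMem (u : closure G →ᵇ ℝ) {x : E2} (hx : x ∉ closure G) :
    extendByZero G u x = 0 :=
  Function.extend_apply' _ _ _ fun ⟨a, ha⟩ => hx (ha ▸ a.2)

theorem continuousOn_extendByZero (u : closure G →ᵇ ℝ) :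
    ContinuousOn (extendByZero G u) (closure G) := by
  rw [continuousOn_iff_continuous_domRestrict]
  convert u.continuous using 1
  funext x
  exact extendByZero_apply_of_mem u x.2

theorem norm_extendByZero_le (u : closure G →ᵇ ℝ) (x : E2) : ‖extendByZero G u x‖ ≤ ‖u‖ := by
  by_cases hx : x ∈ closure G
  · rw [extendByZero_apply_of_mem u hx]
    exact u.norm_coe_le_norm _
  · simp [extendByZero_apply_of_notMem u hx]

theorem continuous_extendByZero_apply (x : E2) :
    Continuous fun u : closure G →ᵇ ℝ => extendByZero G u x := by
  by_cases hx : x ∈ closure G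
  · simp_rw [extendByZero_apply_of_mem _ hx]
    exact continuous_eval_const _
  · simp_rw [extendByZero_apply_of_notMem _ hx]
    exact continuous_const

variable {ψ : E2 → ℝ}

theorem integrableOn_extendByZero_mul (hG : MeasurableSet G) (u : closure G →ᵇ ℝ)
    (hψ : Continuous ψ) (hψc : HasCompactSupport ψ) :
    IntegrableOn (fun x => extendByZero G u x * ψ x) G :=
  (hψ.integrable_of_hasCompactSupport hψc).integrableOn.bdd_mul
    (((continuousOn_extendByZero u).mono subset_closure).aestronglyMeasurable hG)
    (ae_of_all _ (norm_extendByZero_le u))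

theorem continuous_setIntegral_extendByZero_mul (hG : MeasurableSet G)
    (hψ : Continuous ψ) (hψc : HasCompactSupport ψ) :
    Continuous fun u : closure G →ᵇ ℝ => ∫ x in G, extendByZero G u x * ψ x := by
  refine continuous_iff_continuousAt.2 fun u₀ => continuousAt_of_dominated
    (bound := fun x => (‖u₀‖ + 1) * ‖ψ x‖) ?_ ?_ ?_ ?_
  · exact Eventually.of_forall fun u => (integrableOn_extendByZero_mul hG u hψ hψc).1
  · filter_upwards [closedBall_mem_nhds u₀ one_pos] with u hu
    refine ae_of_all _ fun x => ?_
    rw [norm_mul]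
    exact mul_le_mul_of_nonneg_right
      ((norm_extendByZero_le u x).trans (norm_le_of_mem_closedBall hu)) (norm_nonneg _)
  · exact ((hψ.integrable_of_hasCompactSupport hψc).norm.const_mul _).integrableOn
  · exact ae_of_all _ fun x =>
      ((continuous_extendByZero_apply x).mul continuous_const).continuousAt

theorem isClosed_setOf_isDistLaplacianOn (hG : MeasurableSet G) :
    IsClosed {p : (closure G →ᵇ ℝ) × (closure G →ᵇ ℝ) |
      IsDistLaplacianOn G (extendByZero G p.1) (extendByZero G p.2)} := by
  simp only [IsDistLaplacianOn, ofPred_forall]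
  refine isClosed_iInter fun φ => isClosed_iInter fun hφ => isClosed_iInter fun hφc =>
    isClosed_iInter fun _ => isClosed_eq ?_ ?_
  · exact (continuous_setIntegral_extendByZero_mul hG (continuous_lap hφ) hφc.lap).comp
      continuous_fst
  · exact (continuous_setIntegral_extendByZero_mul hG hφ.continuous hφc).comp continuous_snd

theorem eq_of_forall_setIntegral_extendByZero_mul_eq (hG : IsOpen G) {u v : closure G →ᵇ ℝ}
    (h : ∀ φ : E2 → ℝ, ContDiff ℝ (⊤ : ℕ∞) φ → HasCompactSupport φ → tsupport φ ⊆ G →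
      ∫ x in G, extendByZero G u x * φ x = ∫ x in G, extendByZero G v x * φ x) :
    u = v := by
  have hdiff : EqOn (extendByZero G u - extendByZero G v) 0 G := by
    refine IsOpen.eqOn_zero_of_setIntegral_mul_eq_zero (μ := volume) hG
      (((continuousOn_extendByZero u).sub (continuousOn_extendByZero v)).mono subset_closure)
      fun φ hφ hφc hφG => ?_
    simp only [Pi.sub_apply, sub_mul]
    rw [integral_sub (integrableOn_extendByZero_mul hG.measurableSet u hφ.continuous hφc)
      (integrableOn_extendByZero_mul hG.measurableSet v hφ.continuous hφc), h φ hφ hφc hφG,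
      sub_self]
  have hGuv : EqOn (extendByZero G u) (extendByZero G v) G := fun x hx =>
    sub_eq_zero.1 (hdiff hx)
  have hcl : EqOn (extendByZero G u) (extendByZero G v) (closure G) :=
    hGuv.of_subset_closure (continuousOn_extendByZero u) (continuousOn_extendByZero v)
      subset_closure subset_rfl
  ext x
  simpa only [extendByZero_apply_of_mem _ x.2] using hcl x.2

end extendByZero

/-- The operator `P3 u = Δu` with domain `{u ∈ C3(Ḡ) : Δu ∈ C3(Ḡ)}` admits a closure
in the Banach space `C3(Ḡ)`: the closure of its graph is again the graph of a
(single-valued) operator. -/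
theorem P3_admits_closure (S : Setting3) :
    ∀ p ∈ closure S.graphP, ∀ q ∈ closure S.graphP, p.1 = q.1 → p.2 = q.2 := by
  intro p hp q hq hpq
  have hclosure := closure_minimal (s := S.graphP) (fun _ hp => hp.2.2)
    (isClosed_setOf_isDistLaplacianOn S.hG_open.measurableSet)
  refine eq_of_forall_setIntegral_extendByZero_mul_eq S.hG_open fun φ hφ hφc hφG => ?_
  rw [← hclosure hp φ hφ hφc hφG, ← hclosure hq φ hφ hφc hφG, hpq]

end
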